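/- arXiv:1810.07569 — 3 statements merged into one kernel-verified Lean document; each statement's English description precedes it below -/
import Mathlib

section
/- Fix Θ ∈ (0,π/2] and let l ≥ 2 be an integer. The following are equivalent: (a) every R(θ,ψ,φ) with θ ∈ [0,π), ψ ∈ [0,π), φ ∈ [0,4π) can be written as an alternating product of 2l−1 rotations about the two fixed axes ẑ and m̂ = (sin Θ, 0, cos Θ) with all rotation angles in [0,4π) (i.e., either in the order z,m,z,…,z or in the order m,z,m,…,m); (b) Θ ≥ π/(2(l−1)). -/
open Real

/-- The SU(2) rotation by angle φ about the axis (sin θ cos ψ, sin θ sin ψ, cos θ). -/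
noncomputable def Rot (θ ψ φ : ℝ) : Matrix (Fin 2) (Fin 2) ℂ :=
  !![(Real.cos (φ/2) : ℂ) - Complex.I * (Real.sin (φ/2) : ℂ) * (Real.cos θ : ℂ),
     -Complex.I * (Real.sin (φ/2) : ℂ) * (Real.sin θ : ℂ) * Complex.exp (-(Complex.I * (ψ : ℂ)));
     -Complex.I * (Real.sin (φ/2) : ℂ) * (Real.sin θ : ℂ) * Complex.exp (Complex.I * (ψ : ℂ)),
     (Real.cos (φ/2) : ℂ) + Complex.I * (Real.sin (φ/2) : ℂ) * (Real.cos θ : ℂ)]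

/-!
The tilt `zTilt U = arcsin ‖U 0 1‖`, half the angle between `ẑ` and the image of `ẑ` under `U`, is
subadditive on `U(2)`, vanishes on rotations about `ẑ` and is at most `Θ` on rotations about `m̂`.
Hence a word with `l - 1` rotations about `m̂` tilts by at most `(l - 1) Θ`, whereas the rotation
by `π` about `ŷ` tilts by `π / 2`; words starting with `m̂` are reduced to words starting with `ẑ`
by conjugating with the reflection that swaps `ẑ` and `m̂`.
Conversely, writing `Z`, `X`, `M` for rotations about `ẑ`, `x̂`, `m̂`, the Euler decomposition
expresses every rotation as `Z X(2t) Z` with `t` its tilt, and `X(2t)` splits into factors `X(2x)`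
with `x ≤ Θ`, each of which is `Z M Z` for a suitable `M`.
-/

open Complex ComplexConjugate Matrix

noncomputable def cayleyKlein (a b : ℂ) : Matrix (Fin 2) (Fin 2) ℂ :=
  !![a, b; -conj b, conj a]

lemma cayleyKlein_mul (a b c d : ℂ) :
    cayleyKlein a b * cayleyKlein c d = cayleyKlein (a * c - b * conj d) (a * d + b * conj c) := by
  ext i j
  fin_cases i <;> fin_cases j <;> simp [cayleyKlein] <;> ring

lemma conj_exp_I_mul (ψ : ℝ) : conj (Complex.exp (I * ψ)) = Complex.exp (-(I * ψ)) := by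
  rw [← Complex.exp_conj]; simp

lemma conj_exp_neg_I_mul (ψ : ℝ) : conj (Complex.exp (-(I * ψ))) = Complex.exp (I * ψ) := by
  rw [← Complex.exp_conj]; simp

lemma Rot_eq_cayleyKlein (θ ψ φ : ℝ) :
    Rot θ ψ φ = cayleyKlein (Real.cos (φ/2) - I * Real.sin (φ/2) * Real.cos θ)
      (-I * Real.sin (φ/2) * Real.sin θ * Complex.exp (-(I * ψ))) := by
  ext i j
  fin_cases i <;> fin_cases j <;>
    simp [Rot, cayleyKlein, conj_exp_neg_I_mul, -Complex.ofReal_cos, -Complex.ofReal_sin]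

lemma Rot_add (θ ψ s t : ℝ) : Rot θ ψ (s + t) = Rot θ ψ s * Rot θ ψ t := by
  have he : Complex.exp (-(I * ψ)) * Complex.exp (I * ψ) = 1 := by
    rw [← Complex.exp_add, neg_add_cancel, Complex.exp_zero]
  have hθ : (Real.sin θ : ℂ) ^ 2 + (Real.cos θ : ℂ) ^ 2 = 1 := by
    exact_mod_cast Real.sin_sq_add_cos_sq θ
  simp only [Rot_eq_cayleyKlein, cayleyKlein_mul, map_mul, map_sub, map_neg, conj_I, conj_ofReal,
    conj_exp_neg_I_mul, add_div, Real.cos_add, Real.sin_add]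
  congr 1
  · push_cast [-Complex.ofReal_cos, -Complex.ofReal_sin]
    set S : ℂ := Real.sin (s/2) * Real.sin (t/2)
    linear_combination S * Real.sin θ ^ 2 * he + S * hθ
      - S * (Real.cos θ ^ 2 + Real.sin θ ^ 2 * Complex.exp (-(I * ψ)) * Complex.exp (I * ψ)) * I_sq
  · push_cast [-Complex.ofReal_cos, -Complex.ofReal_sin]; ring

lemma Rot_zero_angle (θ ψ : ℝ) : Rot θ ψ 0 = 1 := by
  rw [Rot_eq_cayleyKlein]
  ext i j
  fin_cases i <;> fin_cases j <;> simp [cayleyKlein]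

lemma star_Rot (θ ψ φ : ℝ) : star (Rot θ ψ φ) = Rot θ ψ (-φ) := by
  ext i j
  fin_cases i <;> fin_cases j <;>
    simp [Rot, conj_exp_I_mul, conj_exp_neg_I_mul, neg_div, -Complex.ofReal_cos,
      -Complex.ofReal_sin]

lemma Rot_mem_unitaryGroup (θ ψ φ : ℝ) : Rot θ ψ φ ∈ unitaryGroup (Fin 2) ℂ := by
  rw [mem_unitaryGroup_iff, star_Rot, ← Rot_add, add_neg_cancel, Rot_zero_angle]

lemma Rot_periodic (θ ψ : ℝ) : Function.Periodic (Rot θ ψ) (4 * π) := by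
  intro φ
  have h : Rot θ ψ (4 * π) = 1 := by
    rw [Rot_eq_cayleyKlein]
    ext i j
    fin_cases i <;> fin_cases j <;> simp [cayleyKlein, show 4 * π / 2 = 2 * π by ring]
  rw [Rot_add, h, mul_one]

lemma Rot_zero_zero_eq_cayleyKlein (t : ℝ) :
    Rot 0 0 (-2 * t) = cayleyKlein (Complex.exp (t * I)) 0 := by
  rw [Rot_eq_cayleyKlein, show -2 * t / 2 = -t by ring]
  simp [Complex.exp_mul_I, mul_comm I]

lemma Rot_pi_div_two_zero_eq_cayleyKlein (t : ℝ) :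
    Rot (π / 2) 0 (2 * t) = cayleyKlein (Real.cos t) (-I * Real.sin t) := by
  simp [Rot_eq_cayleyKlein]

lemma Rot_pi_div_two_pi_div_two_pi : Rot (π / 2) (π / 2) π = !![0, -1; 1, 0] := by
  have he : Complex.exp (I * (π / 2)) = I := by rw [mul_comm, Complex.exp_pi_div_two_mul_I]
  ext i j
  fin_cases i <;> fin_cases j <;> simp [Rot, Complex.exp_neg, he]

noncomputable def zTilt (U : Matrix (Fin 2) (Fin 2) ℂ) : ℝ := arcsin ‖U 0 1‖

section Unitary

variable {U V : Matrix (Fin 2) (Fin 2) ℂ}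

lemma sq_norm_zero_zero_add_sq_norm_zero_one (hU : U ∈ unitaryGroup (Fin 2) ℂ) :
    ‖U 0 0‖ ^ 2 + ‖U 0 1‖ ^ 2 = 1 := by
  have h := congrFun (congrFun (mem_unitaryGroup_iff.mp hU) 0) 0
  simp only [mul_apply, Fin.sum_univ_two, star_apply, RCLike.star_def, Complex.mul_conj,
    one_apply_eq, Complex.normSq_eq_norm_sq] at h
  exact_mod_cast h

lemma sq_norm_zero_one_add_sq_norm_one_one (hU : U ∈ unitaryGroup (Fin 2) ℂ) :
    ‖U 0 1‖ ^ 2 + ‖U 1 1‖ ^ 2 = 1 := by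
  have h := congrFun (congrFun (mem_unitaryGroup_iff'.mp hU) 1) 1
  simp only [mul_apply, Fin.sum_univ_two, star_apply, RCLike.star_def, mul_comm (conj _),
    Complex.mul_conj, one_apply_eq, Complex.normSq_eq_norm_sq] at h
  exact_mod_cast h

lemma sin_zTilt (hU : U ∈ unitaryGroup (Fin 2) ℂ) : Real.sin (zTilt U) = ‖U 0 1‖ :=
  Real.sin_arcsin (by linarith [norm_nonneg (U 0 1)]) (entry_norm_bound_of_unitary hU 0 1)

lemma cos_zTilt_eq_norm_zero_zero (hU : U ∈ unitaryGroup (Fin 2) ℂ) :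
    Real.cos (zTilt U) = ‖U 0 0‖ := by
  rw [zTilt, Real.cos_arcsin, ← sq_norm_zero_zero_add_sq_norm_zero_one hU, add_sub_cancel_right,
    Real.sqrt_sq (norm_nonneg _)]

lemma cos_zTilt_eq_norm_one_one (hU : U ∈ unitaryGroup (Fin 2) ℂ) :
    Real.cos (zTilt U) = ‖U 1 1‖ := by
  rw [zTilt, Real.cos_arcsin, ← sq_norm_zero_one_add_sq_norm_one_one hU, add_sub_cancel_left,
    Real.sqrt_sq (norm_nonneg _)]

lemma zTilt_nonneg (U : Matrix (Fin 2) (Fin 2) ℂ) : 0 ≤ zTilt U :=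
  Real.arcsin_nonneg.mpr (norm_nonneg _)

lemma zTilt_mul_le (hU : U ∈ unitaryGroup (Fin 2) ℂ) (hV : V ∈ unitaryGroup (Fin 2) ℂ) :
    zTilt (U * V) ≤ zTilt U + zTilt V := by
  rcases le_or_gt (zTilt U + zTilt V) (π / 2) with hsum | hsum
  · have hbound : ‖(U * V) 0 1‖ ≤ Real.sin (zTilt U + zTilt V) := calc
      ‖(U * V) 0 1‖ = ‖U 0 0 * V 0 1 + U 0 1 * V 1 1‖ := by simp [mul_apply, Fin.sum_univ_two]
      _ ≤ ‖U 0 0‖ * ‖V 0 1‖ + ‖U 0 1‖ * ‖V 1 1‖ := by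
        simpa only [norm_mul] using norm_add_le (U 0 0 * V 0 1) (U 0 1 * V 1 1)
      _ = Real.sin (zTilt U + zTilt V) := by
        rw [Real.sin_add, sin_zTilt hU, sin_zTilt hV, cos_zTilt_eq_norm_zero_zero hU,
          cos_zTilt_eq_norm_one_one hV]; ring
    rw [zTilt, Real.arcsin_le_iff_le_sin ⟨by linarith [norm_nonneg ((U * V) 0 1)],
      entry_norm_bound_of_unitary (mul_mem hU hV) 0 1⟩
      ⟨by linarith [zTilt_nonneg U, zTilt_nonneg V, Real.pi_pos], hsum⟩]
    exact hbound
  · exact (Real.arcsin_le_pi_div_two _).trans hsum.le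

end Unitary

lemma zTilt_Rot_le {θ : ℝ} (hθ : 0 ≤ θ) (ψ φ : ℝ) : zTilt (Rot θ ψ φ) ≤ θ := by
  rcases le_or_gt θ (π / 2) with hθπ | hθπ
  · have hsin : 0 ≤ Real.sin θ := Real.sin_nonneg_of_nonneg_of_le_pi hθ (by linarith [Real.pi_pos])
    have hnorm : ‖Rot θ ψ φ 0 1‖ = |Real.sin (φ / 2)| * Real.sin θ := by
      simp [Rot, Complex.norm_exp, abs_of_nonneg hsin, -Complex.ofReal_sin]
    rw [zTilt, Real.arcsin_le_iff_le_sin ⟨by linarith [norm_nonneg (Rot θ ψ φ 0 1)],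
      entry_norm_bound_of_unitary (Rot_mem_unitaryGroup θ ψ φ) 0 1⟩
      ⟨by linarith [Real.pi_pos], hθπ⟩, hnorm]
    exact mul_le_of_le_one_left hsin (Real.abs_sin_le_one _)
  · exact (Real.arcsin_le_pi_div_two _).trans hθπ.le

section Words

variable {M : Type*} [Monoid M]

def altWord (A B : ℝ → M) (n : ℕ) (β γ : ℕ → ℝ) : M :=
  A (β 0) * ((List.range n).map fun i => B (γ (i + 1)) * A (β (i + 1))).prod

lemma altWord_zero (A B : ℝ → M) (β γ : ℕ → ℝ) : altWord A B 0 β γ = A (β 0) := by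
  simp [altWord]

lemma altWord_succ (A B : ℝ → M) (n : ℕ) (β γ : ℕ → ℝ) :
    altWord A B (n + 1) β γ = altWord A B n β γ * (B (γ (n + 1)) * A (β (n + 1))) := by
  simp [altWord, List.range_succ, mul_assoc]

lemma altWord_congr (A B : ℝ → M) {n : ℕ} {β β' γ γ' : ℕ → ℝ} (hβ : ∀ i ≤ n, β i = β' i)
    (hγ : ∀ i, 1 ≤ i → i ≤ n → γ i = γ' i) : altWord A B n β γ = altWord A B n β' γ' := by
  unfold altWord
  rw [hβ 0 (Nat.zero_le n)]
  congr 1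
  refine congrArg List.prod (List.map_congr_left fun i hi => ?_)
  have hi : i < n := List.mem_range.mp hi
  rw [hβ (i + 1) hi, hγ (i + 1) (Nat.le_add_left 1 i) hi]

lemma exists_altWord_eq_of_periodic {A B : ℝ → M} {c : ℝ} (hA : Function.Periodic A c)
    (hB : Function.Periodic B c) (hc : 0 < c) (n : ℕ) (β γ : ℕ → ℝ) :
    ∃ β' γ' : ℕ → ℝ, (∀ i, β' i ∈ Set.Ico 0 c) ∧ (∀ i, γ' i ∈ Set.Ico 0 c) ∧
      altWord A B n β γ = altWord A B n β' γ' := by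
  choose β' hβ' hAβ using fun i => hA.exists_mem_Ico₀ hc (β i)
  choose γ' hγ' hBγ using fun i => hB.exists_mem_Ico₀ hc (γ i)
  exact ⟨β', γ', hβ', hγ', by simp only [altWord, hAβ, hBγ]⟩

lemma altWord_mem {A B : ℝ → M} {S : Submonoid M} (hA : ∀ φ, A φ ∈ S) (hB : ∀ φ, B φ ∈ S)
    (n : ℕ) (β γ : ℕ → ℝ) : altWord A B n β γ ∈ S := by
  induction n with
  | zero => simpa only [altWord_zero] using hA (β 0)
  | succ n ih => simpa only [altWord_succ] using mul_mem ih (mul_mem (hB _) (hA _))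

lemma SemiconjBy.altWord {p : M} {A B A' B' : ℝ → M} (hA : ∀ φ, SemiconjBy p (A φ) (A' φ))
    (hB : ∀ φ, SemiconjBy p (B φ) (B' φ)) (n : ℕ) (β γ : ℕ → ℝ) :
    SemiconjBy p (altWord A B n β γ) (altWord A' B' n β γ) := by
  induction n with
  | zero => simpa only [altWord_zero] using hA (β 0)
  | succ n ih => simpa only [altWord_succ] using ih.mul_right ((hB _).mul_right (hA _))

end Words

lemma zTilt_altWord_le {Θ : ℝ} (hΘ : 0 ≤ Θ) (n : ℕ) (β γ : ℕ → ℝ) :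
    zTilt (altWord (Rot 0 0) (Rot Θ 0) n β γ) ≤ n * Θ := by
  induction n with
  | zero => simpa [altWord_zero] using zTilt_Rot_le le_rfl 0 (β 0)
  | succ n ih =>
    have hM := Rot_mem_unitaryGroup Θ 0 (γ (n + 1))
    have hZ := Rot_mem_unitaryGroup 0 0 (β (n + 1))
    have hW : altWord (Rot 0 0) (Rot Θ 0) n β γ ∈ unitaryGroup (Fin 2) ℂ :=
      altWord_mem (Rot_mem_unitaryGroup 0 0) (Rot_mem_unitaryGroup Θ 0) n β γ
    rw [altWord_succ]
    calc _ ≤ zTilt (altWord (Rot 0 0) (Rot Θ 0) n β γ)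
            + zTilt (Rot Θ 0 (γ (n + 1)) * Rot 0 0 (β (n + 1))) := zTilt_mul_le hW (mul_mem hM hZ)
      _ ≤ n * Θ + (Θ + 0) := add_le_add ih ((zTilt_mul_le hM hZ).trans
          (add_le_add (zTilt_Rot_le hΘ _ _) (zTilt_Rot_le le_rfl _ _)))
      _ = (n + 1 : ℕ) * Θ := by push_cast; ring

/-- `i` times the rotation by `π` about the bisector of `ẑ` and `m̂`; conjugation by it swaps the
two axes. -/
noncomputable def bisectorFlip (Θ : ℝ) : Matrix (Fin 2) (Fin 2) ℂ :=
  !![(Real.cos (Θ / 2) : ℂ), Real.sin (Θ / 2); Real.sin (Θ / 2), -Real.cos (Θ / 2)]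

lemma bisectorFlip_mul_self (Θ : ℝ) : bisectorFlip Θ * bisectorFlip Θ = 1 := by
  have h : (Real.sin (Θ / 2) : ℂ) ^ 2 + (Real.cos (Θ / 2) : ℂ) ^ 2 = 1 := by
    exact_mod_cast Real.sin_sq_add_cos_sq (Θ / 2)
  ext i j
  fin_cases i <;> fin_cases j <;> simp [bisectorFlip, -Complex.ofReal_cos, -Complex.ofReal_sin]
  · linear_combination h
  · ring
  · ring
  · linear_combination h

lemma semiconjBy_bisectorFlip_Rot_zero (Θ φ : ℝ) :
    SemiconjBy (bisectorFlip Θ) (Rot 0 0 φ) (Rot Θ 0 φ) := by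
  have h : (Real.sin (Θ / 2) : ℂ) ^ 2 + (Real.cos (Θ / 2) : ℂ) ^ 2 = 1 := by
    exact_mod_cast Real.sin_sq_add_cos_sq (Θ / 2)
  have hc : (Real.cos Θ : ℂ) = Real.cos (Θ / 2) ^ 2 - Real.sin (Θ / 2) ^ 2 := by
    exact_mod_cast (by rw [← Real.cos_two_mul', mul_div_cancel₀ Θ two_ne_zero] :
      Real.cos Θ = Real.cos (Θ / 2) ^ 2 - Real.sin (Θ / 2) ^ 2)
  have hs : (Real.sin Θ : ℂ) = 2 * Real.sin (Θ / 2) * Real.cos (Θ / 2) := by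
    exact_mod_cast (by rw [← Real.sin_two_mul, mul_div_cancel₀ Θ two_ne_zero] :
      Real.sin Θ = 2 * Real.sin (Θ / 2) * Real.cos (Θ / 2))
  set S : ℂ := (Real.sin (φ / 2) : ℂ)
  ext i j
  fin_cases i <;> fin_cases j <;>
    simp [Rot, bisectorFlip, -Complex.ofReal_cos, -Complex.ofReal_sin] <;> rw [hc, hs]
  · linear_combination I * S * Real.cos (Θ / 2) * h
  · linear_combination -(I * S * Real.sin (Θ / 2)) * h
  · linear_combination I * S * Real.sin (Θ / 2) * h
  · linear_combination I * S * Real.cos (Θ / 2) * h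

lemma semiconjBy_bisectorFlip_Rot (Θ φ : ℝ) :
    SemiconjBy (bisectorFlip Θ) (Rot Θ 0 φ) (Rot 0 0 φ) := by
  have h : bisectorFlip Θ * Rot 0 0 φ = Rot Θ 0 φ * bisectorFlip Θ :=
    semiconjBy_bisectorFlip_Rot_zero Θ φ
  calc bisectorFlip Θ * Rot Θ 0 φ
        = bisectorFlip Θ * (Rot Θ 0 φ * bisectorFlip Θ) * bisectorFlip Θ := by
          rw [mul_assoc, mul_assoc, bisectorFlip_mul_self, mul_one]
    _ = Rot 0 0 φ * bisectorFlip Θ := by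
          rw [← h, ← mul_assoc, bisectorFlip_mul_self, one_mul]

lemma semiconjBy_bisectorFlip_Rot_pi_div_two_pi_div_two_pi (Θ : ℝ) :
    SemiconjBy (bisectorFlip Θ) (Rot (π / 2) (π / 2) π) (-Rot (π / 2) (π / 2) π) := by
  rw [Rot_pi_div_two_pi_div_two_pi]
  ext i j
  fin_cases i <;> fin_cases j <;> simp [bisectorFlip]

lemma pi_div_two_le_of_Rot_eq_altWord {Θ : ℝ} (hΘ : 0 ≤ Θ) {n : ℕ}
    (h : (∃ β γ, Rot (π / 2) (π / 2) π = altWord (Rot 0 0) (Rot Θ 0) n β γ) ∨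
      ∃ β γ, Rot (π / 2) (π / 2) π = altWord (Rot Θ 0) (Rot 0 0) n β γ) :
    π / 2 ≤ n * Θ := by
  have key : ∀ U : Matrix (Fin 2) (Fin 2) ℂ, ‖U 0 1‖ = 1 →
      ∀ β γ, U = altWord (Rot 0 0) (Rot Θ 0) n β γ → π / 2 ≤ n * Θ := by
    rintro U hU β γ rfl
    simpa [zTilt, hU] using zTilt_altWord_le hΘ n β γ
  have hT : ‖Rot (π / 2) (π / 2) π 0 1‖ = 1 := by simp [Rot_pi_div_two_pi_div_two_pi]
  rcases h with ⟨β, γ, h⟩ | ⟨β, γ, h⟩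
  · exact key _ hT β γ h
  · refine key (-Rot (π / 2) (π / 2) π) (by simpa using hT) β γ ?_
    set P := bisectorFlip Θ
    have hP : SemiconjBy P (altWord (Rot Θ 0) (Rot 0 0) n β γ)
        (altWord (Rot 0 0) (Rot Θ 0) n β γ) :=
      .altWord (semiconjBy_bisectorFlip_Rot Θ) (semiconjBy_bisectorFlip_Rot_zero Θ) n β γ
    calc -Rot (π / 2) (π / 2) π = -Rot (π / 2) (π / 2) π * P * P := by
          rw [mul_assoc, bisectorFlip_mul_self, mul_one]
      _ = altWord (Rot 0 0) (Rot Θ 0) n β γ := by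
          rw [← (semiconjBy_bisectorFlip_Rot_pi_div_two_pi_div_two_pi Θ).eq, h, hP.eq, mul_assoc,
            bisectorFlip_mul_self, mul_one]

lemma cayleyKlein_eq_Rot_mul_Rot_mul_Rot {a b : ℂ} (h : cayleyKlein a b ∈ unitaryGroup (Fin 2) ℂ) :
    ∃ α β, cayleyKlein a b =
      Rot 0 0 α * Rot (π / 2) 0 (2 * zTilt (cayleyKlein a b)) * Rot 0 0 β := by
  have hcos : Real.cos (zTilt (cayleyKlein a b)) = ‖a‖ := by
    simpa [cayleyKlein] using cos_zTilt_eq_norm_zero_zero h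
  have hsin : Real.sin (zTilt (cayleyKlein a b)) = ‖b‖ := by
    simpa [cayleyKlein] using sin_zTilt h
  set s := (arg a + arg b + π / 2) / 2
  set t := (arg a - arg b - π / 2) / 2
  have hst : Complex.exp (s * I) * Complex.exp (t * I) = Complex.exp (arg a * I) := by
    rw [← Complex.exp_add]; congr 1; simp only [s, t]; push_cast; ring
  have hs_t : Complex.exp (s * I) * Complex.exp (-(t * I)) = I * Complex.exp (arg b * I) := by
    rw [← Complex.exp_add, show (s : ℂ) * I + -(t * I) = π / 2 * I + arg b * I by
      simp only [s, t]; push_cast; ring, Complex.exp_add, Complex.exp_pi_div_two_mul_I]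
  refine ⟨-2 * s, -2 * t, ?_⟩
  rw [Rot_zero_zero_eq_cayleyKlein, Rot_zero_zero_eq_cayleyKlein,
    Rot_pi_div_two_zero_eq_cayleyKlein, cayleyKlein_mul, cayleyKlein_mul, hcos, hsin]
  simp only [map_zero, mul_zero, zero_mul, sub_zero, add_zero, ← Complex.exp_conj, map_mul,
    conj_ofReal, conj_I, mul_neg]
  congr 1
  · conv_lhs => rw [← Complex.norm_mul_exp_arg_mul_I a]
    linear_combination (‖a‖ : ℂ) * hst.symm
  · conv_lhs => rw [← Complex.norm_mul_exp_arg_mul_I b]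
    linear_combination (‖b‖ : ℂ) * I * hs_t + ‖b‖ * Complex.exp (arg b * I) * I_sq

lemma exists_Rot_eq_Rot_mul_Rot_mul_Rot (θ ψ φ : ℝ) :
    ∃ α β, Rot θ ψ φ = Rot 0 0 α * Rot (π / 2) 0 (2 * zTilt (Rot θ ψ φ)) * Rot 0 0 β := by
  have h := Rot_mem_unitaryGroup θ ψ φ
  rw [Rot_eq_cayleyKlein] at h ⊢
  exact cayleyKlein_eq_Rot_mul_Rot_mul_Rot h

lemma exists_zTilt_Rot_eq {Θ x : ℝ} (hΘ : Θ ∈ Set.Ioc 0 (π / 2)) (hx : 0 ≤ x) (hxΘ : x ≤ Θ) :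
    ∃ γ, zTilt (Rot Θ 0 γ) = x := by
  have hsinΘ : 0 < Real.sin Θ :=
    Real.sin_pos_of_pos_of_lt_pi hΘ.1 (hΘ.2.trans_lt (by linarith [Real.pi_pos]))
  have hsinx : 0 ≤ Real.sin x :=
    Real.sin_nonneg_of_nonneg_of_le_pi hx (by linarith [hΘ.2, Real.pi_pos])
  have hratio : Real.sin x / Real.sin Θ ≤ 1 := by
    rw [div_le_one hsinΘ]
    exact Real.sin_le_sin_of_le_of_le_pi_div_two (by linarith [Real.pi_pos]) hΘ.2 hxΘ
  refine ⟨2 * arcsin (Real.sin x / Real.sin Θ), ?_⟩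
  have hnorm : ‖Rot Θ 0 (2 * arcsin (Real.sin x / Real.sin Θ)) 0 1‖ = Real.sin x := by
    simp [Rot, -Complex.ofReal_sin, abs_of_nonneg hsinx, abs_of_pos hsinΘ, hsinΘ.ne',
      Real.sin_arcsin (by linarith [div_nonneg hsinx hsinΘ.le]) hratio]
  rw [zTilt, hnorm, Real.arcsin_sin (by linarith [Real.pi_pos]) (by linarith [hΘ.2])]

lemma exists_altWord_eq_Rot_mul_Rot_mul_Rot {Θ : ℝ} (hΘ : Θ ∈ Set.Ioc 0 (π / 2)) (n : ℕ) {t : ℝ}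
    (ht : 0 ≤ t) (htn : t ≤ n * Θ) (α β : ℝ) :
    ∃ β' γ', Rot 0 0 α * Rot (π / 2) 0 (2 * t) * Rot 0 0 β =
      altWord (Rot 0 0) (Rot Θ 0) n β' γ' := by
  induction n generalizing t α β with
  | zero =>
    obtain rfl : t = 0 := le_antisymm (by simpa using htn) ht
    refine ⟨fun _ => α + β, 0, ?_⟩
    rw [altWord_zero, mul_zero, Rot_zero_angle, mul_one, Rot_add]
  | succ n ih =>
    -- with `x = min Θ t`, peel `X(2x) = Z(-α') M(γ) Z(-β')` off the right of `X(2t)`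
    obtain ⟨γ, hγ⟩ := exists_zTilt_Rot_eq hΘ (le_min hΘ.1.le ht) (min_le_left Θ t)
    obtain ⟨α', β', hM⟩ := exists_Rot_eq_Rot_mul_Rot_mul_Rot Θ 0 γ
    rw [hγ] at hM
    have hs : t - min Θ t ≤ n * Θ := by
      rw [sub_le_iff_le_add, ← min_add_add_left]
      push_cast at htn
      exact le_min (by linarith) (by nlinarith [hΘ.1])
    obtain ⟨β₀, γ₀, hw⟩ := ih (sub_nonneg.mpr (min_le_right Θ t)) hs α (-α')
    refine ⟨Function.update β₀ (n + 1) (-β' + β), Function.update γ₀ (n + 1) γ, ?_⟩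
    have hprefix : altWord (Rot 0 0) (Rot Θ 0) n (Function.update β₀ (n + 1) (-β' + β))
        (Function.update γ₀ (n + 1) γ) = altWord (Rot 0 0) (Rot Θ 0) n β₀ γ₀ :=
      altWord_congr _ _ (fun i hi => Function.update_of_ne (show i ≠ n + 1 by omega) _ _)
        (fun i _ hi => Function.update_of_ne (show i ≠ n + 1 by omega) _ _)
    rw [altWord_succ, hprefix, ← hw, Function.update_self, Function.update_self, hM]
    calc Rot 0 0 α * Rot (π / 2) 0 (2 * t) * Rot 0 0 β
        = Rot 0 0 α * Rot (π / 2) 0 (2 * (t - min Θ t)) * Rot 0 0 (-α' + α')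
            * Rot (π / 2) 0 (2 * min Θ t) * Rot 0 0 (β' + (-β' + β)) := by
          rw [neg_add_cancel, Rot_zero_angle, mul_one, add_neg_cancel_left,
            mul_assoc (Rot 0 0 α) (Rot (π / 2) 0 (2 * (t - min Θ t))), ← Rot_add,
            show 2 * (t - min Θ t) + 2 * min Θ t = 2 * t by ring]
      _ = _ := by simp only [Rot_add, mul_assoc]

lemma exists_altWord_eq_Rot {Θ : ℝ} (hΘ : Θ ∈ Set.Ioc 0 (π / 2)) {n : ℕ} (hn : π / 2 ≤ n * Θ)
    (θ ψ φ : ℝ) : ∃ β γ, Rot θ ψ φ = altWord (Rot 0 0) (Rot Θ 0) n β γ := by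
  obtain ⟨α, β, h⟩ := exists_Rot_eq_Rot_mul_Rot_mul_Rot θ ψ φ
  rw [h]
  exact exists_altWord_eq_Rot_mul_Rot_mul_Rot hΘ n (zTilt_nonneg _)
    ((Real.arcsin_le_pi_div_two _).trans hn) α β

theorem stmt15 (Θ : ℝ) (hΘ : Θ ∈ Set.Ioc 0 (π/2)) (l : ℕ) (hl : 2 ≤ l) :
    (∀ θ ψ φ : ℝ, θ ∈ Set.Ico 0 π → ψ ∈ Set.Ico 0 π → φ ∈ Set.Ico 0 (4*π) →
      ((∃ β γ : ℕ → ℝ,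
          (∀ i < l, β i ∈ Set.Ico 0 (4*π)) ∧
          (∀ i, 1 ≤ i → i ≤ l - 1 → γ i ∈ Set.Ico 0 (4*π)) ∧
          Rot θ ψ φ =
            Rot 0 0 (β 0) *
              ((List.range (l - 1)).map
                (fun i => Rot Θ 0 (γ (i+1)) * Rot 0 0 (β (i+1)))).prod) ∨
       (∃ β γ : ℕ → ℝ,
          (∀ i < l, β i ∈ Set.Ico 0 (4*π)) ∧
          (∀ i, 1 ≤ i → i ≤ l - 1 → γ i ∈ Set.Ico 0 (4*π)) ∧
          Rot θ ψ φ =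
            Rot Θ 0 (β 0) *
              ((List.range (l - 1)).map
                (fun i => Rot 0 0 (γ (i+1)) * Rot Θ 0 (β (i+1)))).prod))) ↔
    Θ ≥ π / (2 * ((l : ℝ) - 1)) := by
  have hl' : (0 : ℝ) < ((l - 1 : ℕ) : ℝ) := by exact_mod_cast (by omega : 0 < l - 1)
  have hbound : Θ ≥ π / (2 * ((l : ℝ) - 1)) ↔ π / 2 ≤ ((l - 1 : ℕ) : ℝ) * Θ := by
    rw [Nat.cast_sub (by omega), Nat.cast_one] at hl' ⊢
    rw [ge_iff_le, div_le_iff₀ (by positivity), div_le_iff₀ two_pos]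
    constructor <;> intro h <;> linarith
  rw [hbound]
  constructor
  · intro H
    have hT := H (π / 2) (π / 2) π ⟨by positivity, by linarith [Real.pi_pos]⟩
      ⟨by positivity, by linarith [Real.pi_pos]⟩ ⟨Real.pi_pos.le, by linarith [Real.pi_pos]⟩
    exact pi_div_two_le_of_Rot_eq_altWord hΘ.1.le
      (hT.imp (fun ⟨β, γ, _, _, h⟩ => ⟨β, γ, h⟩) (fun ⟨β, γ, _, _, h⟩ => ⟨β, γ, h⟩))
  · intro h θ ψ φ _ _ _
    obtain ⟨β, γ, hw⟩ := exists_altWord_eq_Rot hΘ h θ ψ φ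
    obtain ⟨β', γ', hβ', hγ', hw'⟩ :=
      exists_altWord_eq_of_periodic (Rot_periodic 0 0) (Rot_periodic Θ 0) (by positivity)
        (l - 1) β γ
    exact .inl ⟨β', γ', fun i _ => hβ' i, fun i _ _ => hγ' i, hw.trans hw'⟩
end

section
/- Fix Θ ∈ (0,π/2] and an integer l ≥ 2 with (l−1)·Θ ≤ π/2. Suppose ρ₁, …, ρ_{l−1} ∈ [0, 2Θ] and η₀, η₁, …, η_{l−1} ∈ [0, 2π), and let B = R(0,0,η₀)·R(π/2,0,ρ₁)·R(0,0,η₁)·⋯·R(π/2,0,ρ_{l−1})·R(0,0,η_{l−1}). Then the (1,1) entry of B satisfies |B₁₁| ≥ cos((l−1)·Θ). -/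
open Real

/-!
The phase rotations `R(0,0,η)` are diagonal with entries of modulus one, so they never change the
modulus of the `(1,1)` entry, and every partial product is unitary. If the first row `(a, b)` of a
unitary matrix satisfies `|a| ≥ cos S` with `S ≤ π/2`, then `|b| ≤ sin S`, and right multiplication
by `R(π/2,0,ρ)` turns `a` into `a cos(ρ/2) - i b sin(ρ/2)`, of modulus at least
`cos S cos(ρ/2) - sin S sin(ρ/2) = cos(S + ρ/2)`. Since `ρ/2 ≤ Θ`, the angle grows by at most `Θ`
per factor, hence stays below `(l-1)Θ ≤ π/2`.
-/

open Complex ComplexConjugate in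
theorem rot_mem_unitaryGroup (θ ψ φ : ℝ) : Rot θ ψ φ ∈ Matrix.unitaryGroup (Fin 2) ℂ := by
  have hu : exp (I * ψ) * conj (exp (I * ψ)) = 1 := by
    rw [← Complex.exp_conj, ← Complex.exp_add]; simp
  have hconj : exp (-(I * ψ)) = conj (exp (I * ψ)) := by
    rw [← Complex.exp_conj]; simp
  have hφ : (Real.sin (φ / 2) : ℂ) ^ 2 + (Real.cos (φ / 2) : ℂ) ^ 2 = 1 := by
    exact_mod_cast Real.sin_sq_add_cos_sq (φ / 2)
  have hθ : (Real.sin θ : ℂ) ^ 2 + (Real.cos θ : ℂ) ^ 2 = 1 := by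
    exact_mod_cast Real.sin_sq_add_cos_sq θ
  rw [Matrix.mem_unitaryGroup_iff, Rot, hconj]
  generalize exp (I * ψ) = u at *
  generalize Real.sin (φ / 2) = s at *
  generalize Real.cos (φ / 2) = c at *
  generalize Real.sin θ = s' at *
  generalize Real.cos θ = c' at *
  rw [Matrix.one_fin_two]
  ext i j
  fin_cases i <;> fin_cases j <;>
    simp only [Matrix.mul_apply, Fin.sum_univ_two, Matrix.star_apply, RCLike.star_def,
      Matrix.of_apply, Matrix.cons_val', Matrix.cons_val_zero, Matrix.cons_val_one,
      Matrix.cons_val_fin_one, Fin.zero_eta, Fin.mk_one, Fin.isValue, map_sub, map_add, map_neg,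
      map_mul, conj_ofReal, conj_I, conj_conj]
  · linear_combination (↑s ^ 2 * ↑s' ^ 2) * hu + ↑s ^ 2 * hθ + hφ
      - (↑s ^ 2 * ↑c' ^ 2 + ↑s ^ 2 * ↑s' ^ 2 * u * conj u) * I_sq
  · ring
  · ring
  · linear_combination (↑s ^ 2 * ↑s' ^ 2) * hu + ↑s ^ 2 * hθ + hφ
      - (↑s ^ 2 * ↑c' ^ 2 + ↑s ^ 2 * ↑s' ^ 2 * u * conj u) * I_sq

theorem Matrix.sum_sq_norm_apply_of_mem_unitaryGroup {n 𝕜 : Type*} [Fintype n] [DecidableEq n]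
    [RCLike 𝕜] {A : Matrix n n 𝕜} (hA : A ∈ Matrix.unitaryGroup n 𝕜) (i : n) :
    ∑ j, ‖A i j‖ ^ 2 = 1 := by
  have h := congrFun (congrFun (Matrix.mem_unitaryGroup_iff.1 hA) i) i
  simp only [Matrix.mul_apply, Matrix.star_apply, Matrix.one_apply_eq, RCLike.star_def,
    RCLike.mul_conj] at h
  exact_mod_cast h

theorem rot_zero_zero_apply_zero_one (η : ℝ) : Rot 0 0 η 0 1 = 0 := by
  simp [Rot]

theorem rot_zero_zero_apply_one_zero (η : ℝ) : Rot 0 0 η 1 0 = 0 := by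
  simp [Rot]

theorem mul_rot_half_pi_apply_zero_zero (A : Matrix (Fin 2) (Fin 2) ℂ) (ρ : ℝ) :
    (A * Rot (π / 2) 0 ρ) 0 0 =
      A 0 0 * Real.cos (ρ / 2) - Complex.I * A 0 1 * Real.sin (ρ / 2) := by
  simp [Rot, Matrix.mul_apply, Fin.sum_univ_two]
  ring

theorem norm_rot_zero_zero_apply_zero_zero (η : ℝ) : ‖Rot 0 0 η 0 0‖ = 1 := by
  have h := Matrix.sum_sq_norm_apply_of_mem_unitaryGroup (rot_mem_unitaryGroup 0 0 η) 0
  rw [Fin.sum_univ_two, rot_zero_zero_apply_zero_one, norm_zero, zero_pow two_ne_zero,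
    add_zero] at h
  exact (pow_eq_one_iff_of_nonneg (norm_nonneg _) two_ne_zero).1 h

theorem norm_mul_rot_zero_zero_apply_zero_zero (A : Matrix (Fin 2) (Fin 2) ℂ) (η : ℝ) :
    ‖(A * Rot 0 0 η) 0 0‖ = ‖A 0 0‖ := by
  rw [Matrix.mul_apply, Fin.sum_univ_two, rot_zero_zero_apply_one_zero, mul_zero, add_zero,
    norm_mul, norm_rot_zero_zero_apply_zero_zero, mul_one]

theorem cos_add_le_norm_mul_cos_sub_I_mul_sin {a b : ℂ} (hab : ‖a‖ ^ 2 + ‖b‖ ^ 2 = 1)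
    {S r : ℝ} (hS : 0 ≤ S) (hr : 0 ≤ r) (hSr : S + r ≤ π / 2) (ha : Real.cos S ≤ ‖a‖) :
    Real.cos (S + r) ≤ ‖a * Real.cos r - Complex.I * b * Real.sin r‖ := by
  have hcos_r : 0 ≤ Real.cos r := Real.cos_nonneg_of_mem_Icc ⟨by linarith, by linarith⟩
  have hsin_r : 0 ≤ Real.sin r := Real.sin_nonneg_of_nonneg_of_le_pi hr (by linarith)
  have hcos_S : 0 ≤ Real.cos S := Real.cos_nonneg_of_mem_Icc ⟨by linarith, by linarith⟩
  have hsin_S : 0 ≤ Real.sin S := Real.sin_nonneg_of_nonneg_of_le_pi hS (by linarith)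
  have hb : ‖b‖ ≤ Real.sin S := by
    rw [← pow_le_pow_iff_left₀ (norm_nonneg b) hsin_S two_ne_zero]
    nlinarith [pow_le_pow_left₀ hcos_S ha 2, Real.sin_sq_add_cos_sq S]
  calc Real.cos (S + r) = Real.cos S * Real.cos r - Real.sin S * Real.sin r := Real.cos_add S r
    _ ≤ ‖a‖ * Real.cos r - ‖b‖ * Real.sin r := by gcongr
    _ = ‖a * Real.cos r‖ - ‖Complex.I * b * Real.sin r‖ := by
      simp only [norm_mul, Complex.norm_real, Complex.norm_I, Real.norm_of_nonneg hcos_r,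
        Real.norm_of_nonneg hsin_r, one_mul]
    _ ≤ ‖a * Real.cos r - Complex.I * b * Real.sin r‖ := norm_sub_norm_le _ _

theorem cos_add_le_norm_mul_rot_apply_zero_zero {A : Matrix (Fin 2) (Fin 2) ℂ}
    (hA : A ∈ Matrix.unitaryGroup (Fin 2) ℂ) {S ρ : ℝ} (hS : 0 ≤ S) (hρ : 0 ≤ ρ)
    (hSρ : S + ρ / 2 ≤ π / 2) (hAS : Real.cos S ≤ ‖A 0 0‖) (η : ℝ) :
    Real.cos (S + ρ / 2) ≤ ‖(A * (Rot (π / 2) 0 ρ * Rot 0 0 η)) 0 0‖ := by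
  have hrow := Matrix.sum_sq_norm_apply_of_mem_unitaryGroup hA 0
  rw [Fin.sum_univ_two] at hrow
  rw [← Matrix.mul_assoc, norm_mul_rot_zero_zero_apply_zero_zero, mul_rot_half_pi_apply_zero_zero]
  exact cos_add_le_norm_mul_cos_sub_I_mul_sin hrow hS (by linarith) hSρ hAS

theorem cos_le_norm_mul_prod_rot_apply_zero_zero {A : Matrix (Fin 2) (Fin 2) ℂ}
    (hA : A ∈ Matrix.unitaryGroup (Fin 2) ℂ) {S Θ : ℝ} (hS : 0 ≤ S) (hAS : Real.cos S ≤ ‖A 0 0‖)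
    (L : List (ℝ × ℝ)) (hL : ∀ p ∈ L, p.1 ∈ Set.Icc 0 (2 * Θ))
    (hlen : S + L.length * Θ ≤ π / 2) :
    Real.cos (S + L.length * Θ) ≤
      ‖(A * (L.map fun p => Rot (π / 2) 0 p.1 * Rot 0 0 p.2).prod) 0 0‖ := by
  induction L generalizing A S with
  | nil => simpa using hAS
  | cons p L ih =>
    obtain ⟨hp0, hpΘ⟩ := hL p List.mem_cons_self
    have hΘ : 0 ≤ Θ := by linarith
    have hLΘ : 0 ≤ L.length * Θ := mul_nonneg L.length.cast_nonneg hΘ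
    simp only [List.length_cons, Nat.cast_succ] at hlen ⊢
    rw [List.map_cons, List.prod_cons, ← Matrix.mul_assoc, show S + (L.length + 1) * Θ =
      S + Θ + L.length * Θ by ring]
    refine ih (mul_mem hA (mul_mem (rot_mem_unitaryGroup _ _ _) (rot_mem_unitaryGroup _ _ _)))
      (by linarith) ?_ (fun q hq => hL q (List.mem_cons_of_mem p hq)) (by linarith)
    calc Real.cos (S + Θ) ≤ Real.cos (S + p.1 / 2) :=
          Real.cos_le_cos_of_nonneg_of_le_pi (by linarith) (by linarith [pi_pos]) (by linarith)
      _ ≤ _ := cos_add_le_norm_mul_rot_apply_zero_zero hA hS hp0 (by linarith) hAS p.2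

theorem stmt18_general (Θ : ℝ) (l : ℕ) (hl : 2 ≤ l)
    (hlΘ : ((l : ℝ) - 1) * Θ ≤ π/2)
    (ρ η : ℕ → ℝ)
    (hρ : ∀ i, 1 ≤ i → i ≤ l - 1 → ρ i ∈ Set.Icc 0 (2*Θ)) :
    ‖((Rot 0 0 (η 0) *
        ((List.range (l - 1)).map
          (fun i => Rot (π/2) 0 (ρ (i+1)) * Rot 0 0 (η (i+1)))).prod) 0 0)‖ ≥
      Real.cos (((l : ℝ) - 1) * Θ) := by
  have hlen : (((List.range (l - 1)).map fun i => (ρ (i + 1), η (i + 1))).length : ℝ) = l - 1 := by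
    rw [List.length_map, List.length_range, Nat.cast_sub (by omega), Nat.cast_one]
  have key := cos_le_norm_mul_prod_rot_apply_zero_zero (rot_mem_unitaryGroup 0 0 (η 0)) le_rfl
    (by rw [Real.cos_zero, norm_rot_zero_zero_apply_zero_zero])
    ((List.range (l - 1)).map fun i => (ρ (i + 1), η (i + 1)))
    (by
      simp only [List.mem_map, List.mem_range]
      rintro _ ⟨i, hi, rfl⟩
      exact hρ (i + 1) (by omega) (by omega))
    (by rw [hlen, zero_add]; exact hlΘ)
  rw [hlen, zero_add, List.map_map] at key
  exact key

theorem stmt18 (Θ : ℝ) (hΘ : Θ ∈ Set.Ioc 0 (π/2)) (l : ℕ) (hl : 2 ≤ l)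
    (hlΘ : ((l : ℝ) - 1) * Θ ≤ π/2)
    (ρ η : ℕ → ℝ)
    (hρ : ∀ i, 1 ≤ i → i ≤ l - 1 → ρ i ∈ Set.Icc 0 (2*Θ))
    (hη : ∀ i < l, η i ∈ Set.Ico 0 (2*π)) :
    ‖((Rot 0 0 (η 0) *
        ((List.range (l - 1)).map
          (fun i => Rot (π/2) 0 (ρ (i+1)) * Rot 0 0 (η (i+1)))).prod) 0 0)‖ ≥
      Real.cos (((l : ℝ) - 1) * Θ) :=
  stmt18_general Θ l hl hlΘ ρ η hρ
end

section
/- Fix Θ ∈ (0,π/2] and let θ ∈ [0,π), ψ ∈ [0,π), φ ∈ [0,4π). For β₁ ∈ ℝ let e₁₂(β₁) denote the (1,2) entry of the matrix R(Θ,0,−β₁)·R(θ,ψ,φ). Then for every β₁, |e₁₂(β₁)|² = ((B−A)/2)·cos β₁ + C·sin β₁ + (A+B)/2, and consequently the minimum of |e₁₂(β₁)| over β₁ ∈ [0,4π) equals sin Λ(θ,ψ,φ,Θ). -/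
open Real

/-- A(θ,ψ,φ,Θ). -/
noncomputable def Acoef (θ ψ φ Θ : ℝ) : ℝ :=
  (Real.cos ψ * Real.cos Θ * Real.sin θ * Real.sin (φ/2) -
      Real.sin Θ * Real.cos θ * Real.sin (φ/2))^2 +
  (Real.sin ψ * Real.cos Θ * Real.sin θ * Real.sin (φ/2) -
      Real.sin Θ * Real.cos (φ/2))^2

/-- B(θ,φ). -/
noncomputable def Bcoef (θ ψ φ Θ : ℝ) : ℝ := (Real.sin θ * Real.sin (φ/2))^2

/-- C(θ,ψ,φ,Θ). -/
noncomputable def Ccoef (θ ψ φ Θ : ℝ) : ℝ :=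
  Real.sin Θ * Real.sin θ * Real.sin (φ/2) *
    (Real.sin ψ * Real.sin (φ/2) * Real.cos θ - Real.cos ψ * Real.cos (φ/2))

/-- Λ(θ,ψ,φ,Θ). -/
noncomputable def Lam (θ ψ φ Θ : ℝ) : ℝ :=
  Real.arcsin (Real.sqrt ((Acoef θ ψ φ Θ + Bcoef θ ψ φ Θ)/2 -
    Real.sqrt ((Ccoef θ ψ φ Θ)^2 + (Bcoef θ ψ φ Θ - Acoef θ ψ φ Θ)^2/4)))

/-!
Multiplying out the matrices writes the entry as `x + y i` with `x, y` linear in `cos (β₁/2)` and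
`sin (β₁/2)`, so `|e₁₂|²` is a quadratic form in these, i.e. an affine function
`a cos β₁ + c sin β₁ + m` of the doubled angle. Such a function has minimum `m - √(a² + c²)`,
attained where `(cos β₁, sin β₁)` points opposite to `(a, c)`; taking square roots gives the
minimum of `|e₁₂|`. The arcsine in `Λ` is harmless because `m - √(a² + c²) ≤ B ≤ 1`.
-/

lemma neg_sqrt_le_mul_cos_add_mul_sin (a c β : ℝ) :
    -√(a ^ 2 + c ^ 2) ≤ a * cos β + c * sin β := by
  have hsq : (a * cos β + c * sin β) ^ 2 ≤ a ^ 2 + c ^ 2 := by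
    nlinarith [sin_sq_add_cos_sq β, sq_nonneg (a * sin β - c * cos β)]
  exact (neg_abs_le _).trans' (neg_le_neg (abs_le_sqrt hsq))

/-- The bound `neg_sqrt_le_mul_cos_add_mul_sin` is attained at `β = arg (a + c i) + π`. -/
lemma exists_mul_cos_add_mul_sin_eq_neg_sqrt (a c : ℝ) :
    ∃ β ∈ Set.Ioc 0 (2 * π), a * cos β + c * sin β = -√(a ^ 2 + c ^ 2) := by
  set w : ℂ := ⟨a, c⟩
  have hre : ‖w‖ * cos (Complex.arg w) = a := Complex.norm_mul_cos_arg w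
  have him : ‖w‖ * sin (Complex.arg w) = c := Complex.norm_mul_sin_arg w
  have hnorm : ‖w‖ = √(a ^ 2 + c ^ 2) := Complex.norm_eq_sqrt_sq_add_sq w
  refine ⟨Complex.arg w + π, ⟨?_, ?_⟩, ?_⟩
  · linarith [Complex.neg_pi_lt_arg w]
  · linarith [Complex.arg_le_pi w]
  · rw [cos_add_pi, sin_add_pi, ← hnorm, ← hre, ← him]
    linear_combination -‖w‖ * sin_sq_add_cos_sq (Complex.arg w)

lemma isLeast_image_of_sq_eq_mul_cos_add_mul_sin {s : Set ℝ} (hs : Set.Ioc 0 (2 * π) ⊆ s)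
    {f : ℝ → ℝ} (hf0 : ∀ β, 0 ≤ f β) {a c m : ℝ}
    (hf : ∀ β, f β ^ 2 = a * cos β + c * sin β + m) :
    IsLeast (f '' s) √(m - √(a ^ 2 + c ^ 2)) := by
  obtain ⟨β₀, hβ₀, hmin⟩ := exists_mul_cos_add_mul_sin_eq_neg_sqrt a c
  constructor
  · refine ⟨β₀, hs hβ₀, ?_⟩
    rw [← sqrt_sq (hf0 β₀), hf β₀, hmin, neg_add_eq_sub]
  · rintro _ ⟨β, -, rfl⟩
    rw [← sqrt_sq (hf0 β), hf β]
    exact sqrt_le_sqrt (by linarith [neg_sqrt_le_mul_cos_add_mul_sin a c β])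

lemma half_add_sub_sqrt_le (A B C : ℝ) : (A + B) / 2 - √(C ^ 2 + (B - A) ^ 2 / 4) ≤ B := by
  have h : |(B - A) / 2| ≤ √(C ^ 2 + (B - A) ^ 2 / 4) :=
    abs_le_sqrt (by nlinarith [sq_nonneg C])
  linarith [neg_abs_le ((B - A) / 2)]

lemma Bcoef_le_one (θ ψ φ Θ : ℝ) : Bcoef θ ψ φ Θ ≤ 1 := by
  rw [Bcoef, mul_pow]
  exact mul_le_one₀ (sin_sq_le_one θ) (sq_nonneg _) (sin_sq_le_one (φ / 2))

lemma sin_Lam (θ ψ φ Θ : ℝ) :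
    sin (Lam θ ψ φ Θ) = √((Acoef θ ψ φ Θ + Bcoef θ ψ φ Θ) / 2 -
      √(((Bcoef θ ψ φ Θ - Acoef θ ψ φ Θ) / 2) ^ 2 + Ccoef θ ψ φ Θ ^ 2)) := by
  have hle := (half_add_sub_sqrt_le (Acoef θ ψ φ Θ) _ (Ccoef θ ψ φ Θ)).trans
    (Bcoef_le_one θ ψ φ Θ)
  rw [Lam, sin_arcsin ((neg_nonpos.mpr zero_le_one).trans (sqrt_nonneg _))
    (sqrt_le_one.mpr hle)]
  ring_nf

lemma Rot_mul_Rot_apply_zero_one (Θ θ ψ φ β : ℝ) :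
    (Rot Θ 0 (-β) * Rot θ ψ φ) 0 1 =
      (↑(-cos (β / 2) * (sin θ * sin (φ / 2)) * sin ψ
          + sin (β / 2) * (cos Θ * (sin θ * sin (φ / 2)) * cos ψ
              - sin Θ * (sin (φ / 2) * cos θ))) : ℂ)
      + (↑(-cos (β / 2) * (sin θ * sin (φ / 2)) * cos ψ
          + sin (β / 2) * (-(cos Θ * (sin θ * sin (φ / 2)) * sin ψ)
              + sin Θ * cos (φ / 2))) : ℂ) * Complex.I := by
  have hexp : Complex.exp (-(Complex.I * ψ)) = cos ψ - sin ψ * Complex.I := by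
    rw [show -(Complex.I * ψ) = ((-ψ : ℝ) : ℂ) * Complex.I by push_cast; ring,
      Complex.exp_mul_I, ← Complex.ofReal_cos, ← Complex.ofReal_sin]
    push_cast [cos_neg, sin_neg]
    ring
  simp only [Rot, Matrix.mul_apply, Fin.sum_univ_two, Matrix.of_apply, Matrix.cons_val',
    Matrix.cons_val_zero, Matrix.cons_val_one, Matrix.empty_val', Matrix.cons_val_fin_one,
    hexp, Complex.ofReal_zero, mul_zero, neg_zero, Complex.exp_zero, neg_div, cos_neg, sin_neg]
  apply Complex.ext <;> simp <;> ring

lemma norm_Rot_mul_Rot_apply_zero_one_sq (Θ θ ψ φ β : ℝ) :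
    ‖(Rot Θ 0 (-β) * Rot θ ψ φ) 0 1‖ ^ 2 =
      (Bcoef θ ψ φ Θ - Acoef θ ψ φ Θ) / 2 * cos β +
        Ccoef θ ψ φ Θ * sin β + (Acoef θ ψ φ Θ + Bcoef θ ψ φ Θ) / 2 := by
  rw [Rot_mul_Rot_apply_zero_one, Complex.sq_norm, Complex.normSq_add_mul_I,
    show β = 2 * (β / 2) by ring, cos_two_mul, sin_two_mul, show 2 * (β / 2) / 2 = β / 2 by ring]
  have hβ := sin_sq_add_cos_sq (β / 2)
  have hψ := sin_sq_add_cos_sq ψ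
  simp only [Acoef, Bcoef, Ccoef]
  linear_combination (sin θ * sin (φ / 2)) ^ 2 * cos (β / 2) ^ 2 * hψ
    + ((cos ψ * cos Θ * sin θ * sin (φ / 2) - sin Θ * cos θ * sin (φ / 2)) ^ 2 +
      (sin ψ * cos Θ * sin θ * sin (φ / 2) - sin Θ * cos (φ / 2)) ^ 2) * hβ

theorem stmt19_general (Θ : ℝ)
    (θ ψ φ : ℝ) :
    (∀ β₁ : ℝ,
      ‖(Rot Θ 0 (-β₁) * Rot θ ψ φ) 0 1‖^2 =
        (Bcoef θ ψ φ Θ - Acoef θ ψ φ Θ)/2 * Real.cos β₁ +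
          Ccoef θ ψ φ Θ * Real.sin β₁ + (Acoef θ ψ φ Θ + Bcoef θ ψ φ Θ)/2) ∧
    IsLeast ((fun β₁ => ‖(Rot Θ 0 (-β₁) * Rot θ ψ φ) 0 1‖) '' Set.Ico 0 (4*π))
      (Real.sin (Lam θ ψ φ Θ)) := by
  have hsq := norm_Rot_mul_Rot_apply_zero_one_sq Θ θ ψ φ
  refine ⟨hsq, ?_⟩
  have hs : Set.Ioc 0 (2 * π) ⊆ Set.Ico 0 (4 * π) := fun β ⟨h0, h2π⟩ =>
    ⟨h0.le, by linarith [pi_pos]⟩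
  rw [sin_Lam]
  exact isLeast_image_of_sq_eq_mul_cos_add_mul_sin hs (fun _ => norm_nonneg _) hsq

theorem stmt19 (Θ : ℝ) (hΘ : Θ ∈ Set.Ioc 0 (π/2))
    (θ ψ φ : ℝ) (hθ : θ ∈ Set.Ico 0 π) (hψ : ψ ∈ Set.Ico 0 π) (hφ : φ ∈ Set.Ico 0 (4*π)) :
    (∀ β₁ : ℝ,
      ‖(Rot Θ 0 (-β₁) * Rot θ ψ φ) 0 1‖^2 =
        (Bcoef θ ψ φ Θ - Acoef θ ψ φ Θ)/2 * Real.cos β₁ +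
          Ccoef θ ψ φ Θ * Real.sin β₁ + (Acoef θ ψ φ Θ + Bcoef θ ψ φ Θ)/2) ∧
    IsLeast ((fun β₁ => ‖(Rot Θ 0 (-β₁) * Rot θ ψ φ) 0 1‖) '' Set.Ico 0 (4*π))
      (Real.sin (Lam θ ψ φ Θ)) :=
  stmt19_general Θ θ ψ φ
end
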